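/- Let (X, {*^g}_{g∈G}) be a G-family of racks and N ⊴ G. With the operation (x,(g₁,n₁)) * (y,(g,n)) = (x *^{gn} y, (g₁^{gn}, n₁^{gn})) and the fiberwise group multiplication (x,(g₁,n₁))(x,(g₂,n₂)) = (x,(g₁g₂, n₁^{g₂}n₂)) on X × (G ⋉ N), right multiplication by any element is a group homomorphism on fibers: for all x,y ∈ X and (g,n),(g₁,n₁),(g₂,n₂) ∈ G ⋉ N, ((x,(g₁,n₁))(x,(g₂,n₂))) * (y,(g,n)) = ((x,(g₁,n₁)) * (y,(g,n))) · ((x,(g₂,n₂)) * (y,(g,n))), and both sides lie in the same fiber {x *^{gn} y} × (G ⋉ N). -/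

import Mathlib

/-!
Right multiplication by `(y, (g, n))` sends `(x, p)` to `(x *^{gn} y, p^{gn})`: its first coordinate
does not depend on `p`, and on the second it is conjugation by `gn`, which is an automorphism of
`G ⋉ N` because `(n₁^{g₂})^h = (n₁^h)^{g₂^h}`.
-/

/-- Right conjugate `g⁻¹ n g` of an element of a normal subgroup. -/
def conjN {G : Type*} [Group G] {N : Subgroup G} (hN : N.Normal) (n : N) (g : G) : N :=
  ⟨g⁻¹ * (n : G) * g, hN.conj_mem' n n.2 g⟩

/-- Multiplication of the semidirect product `G ⋉ N`:
`(g₁,n₁)(g₂,n₂) = (g₁g₂, n₁^{g₂} n₂)`. -/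
def sdMul {G : Type*} [Group G] {N : Subgroup G} (hN : N.Normal) (p q : G × N) : G × N :=
  (p.1 * q.1, conjN hN p.2 q.1 * q.2)

/-- The operation on `X × (G ⋉ N)`:
`(x,(g₁,n₁)) * (y,(g₂,n₂)) = (x *^{g₂n₂} y, (g₁^{g₂n₂}, n₁^{g₂n₂}))`. -/
def astXN {G X : Type*} [Group G] {N : Subgroup G} (hN : N.Normal)
    (star : G → X → X → X) (u v : X × (G × N)) : X × (G × N) :=
  (star (v.2.1 * (v.2.2 : G)) u.1 v.1,
    ((v.2.1 * (v.2.2 : G))⁻¹ * u.2.1 * (v.2.1 * (v.2.2 : G)),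
      conjN hN u.2.2 (v.2.1 * (v.2.2 : G))))

def sdConj {G : Type*} [Group G] {N : Subgroup G} (hN : N.Normal) (h : G) (p : G × N) : G × N :=
  (h⁻¹ * p.1 * h, conjN hN p.2 h)

section

variable {G : Type*} [Group G] {N : Subgroup G} (hN : N.Normal)

theorem coe_conjN (n : N) (g : G) : (conjN hN n g : G) = g⁻¹ * n * g := rfl

theorem conjN_mul (a b : N) (g : G) : conjN hN (a * b) g = conjN hN a g * conjN hN b g :=
  Subtype.ext (by simp only [coe_conjN, Subgroup.coe_mul]; group)

theorem conjN_conjN (n : N) (g h : G) : conjN hN (conjN hN n g) h = conjN hN n (g * h) :=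
  Subtype.ext (by simp only [coe_conjN]; group)

theorem sdConj_sdMul (h : G) (p q : G × N) :
    sdConj hN h (sdMul hN p q) = sdMul hN (sdConj hN h p) (sdConj hN h q) := by
  refine Prod.ext (by simp only [sdConj, sdMul]; group) ?_
  simp only [sdConj, sdMul, conjN_mul, conjN_conjN]
  congr 2
  group

theorem astXN_snd {X : Type*} (star : G → X → X → X) (u v : X × (G × N)) :
    (astXN hN star u v).2 = sdConj hN (v.2.1 * v.2.2) u.2 := rfl

end

theorem astXN_fiber_hom_general
    (G : Type*) [Group G] (X : Type*) (star : G → X → X → X)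
    (N : Subgroup G) (hN : N.Normal) :
    ∀ (x y : X) (q p₁ p₂ : G × N),
      (astXN hN star (x, p₁) (y, q)).1 = star (q.1 * (q.2 : G)) x y ∧
      (astXN hN star (x, p₂) (y, q)).1 = star (q.1 * (q.2 : G)) x y ∧
      astXN hN star (x, sdMul hN p₁ p₂) (y, q)
        = (star (q.1 * (q.2 : G)) x y,
            sdMul hN (astXN hN star (x, p₁) (y, q)).2 (astXN hN star (x, p₂) (y, q)).2) := by
  intro x y q p₁ p₂
  refine ⟨rfl, rfl, Prod.ext rfl ?_⟩
  simp only [astXN_snd]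
  exact sdConj_sdMul hN _ p₁ p₂

/-- Axiom (iii) for `X × (G ⋉ N)`: right multiplication by an
element `(y,(g,n))` maps the fiber `{x} × (G ⋉ N)` into the single fiber
`{x *^{gn} y} × (G ⋉ N)` and is a group homomorphism there. -/
theorem astXN_fiber_hom
    (G : Type*) [Group G] (X : Type*) (star : G → X → X → X)
    (h1 : ∀ (g h : G) (x y : X), star (g * h) x y = star h (star g x y) y)
    (h2 : ∀ (x y : X), star 1 x y = x)
    (h3 : ∀ (g h : G) (x y z : X),
      star h (star g x y) z = star (h⁻¹ * g * h) (star h x z) (star h y z))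
    (N : Subgroup G) (hN : N.Normal) :
    ∀ (x y : X) (q p₁ p₂ : G × N),
      (astXN hN star (x, p₁) (y, q)).1 = star (q.1 * (q.2 : G)) x y ∧
      (astXN hN star (x, p₂) (y, q)).1 = star (q.1 * (q.2 : G)) x y ∧
      astXN hN star (x, sdMul hN p₁ p₂) (y, q)
        = (star (q.1 * (q.2 : G)) x y,
            sdMul hN (astXN hN star (x, p₁) (y, q)).2 (astXN hN star (x, p₂) (y, q)).2) :=
  astXN_fiber_hom_general G X star N hN
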